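/- arXiv:1204.1531 — 2 statements merged into one kernel-verified Lean document; each statement's English description precedes it below -/
import Mathlib

section
/- On the elliptic curve y² + txy + (t²(t−1)/16)y = x³ + (t(t−1)/16)x² over ℚ(t), the point P = (0, 0) is a torsion point of exact order 4. -/
open WeierstrassCurve
open Classical

/-!
Since `a₄ = a₆ = 0`, the tangent at `P = (0, 0)` is horizontal, so `2P = (-a₂, a₁a₂ - a₃)`.
The relation `a₃ = a₁a₂` (Tate's normal form for a point of order `4`) puts `2P` on the
line `y = 0`, where it is its own negative: `2P` has order `2`, hence `P` has order `4`.
-/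

namespace WeierstrassCurve.Affine

section Ring

variable {R : Type*} [CommRing R] (W : Affine R)

lemma addY_zero_zero_zero_zero : W.addY 0 0 0 0 = W.a₁ * W.a₂ - W.a₃ := by
  simp only [addY, negY, negAddY, addX]
  ring

end Ring

variable {F : Type*} [Field F] [DecidableEq F] {W : Affine F}

lemma slope_zero_zero_zero_zero (ha₄ : W.a₄ = 0) : W.slope 0 0 0 0 = 0 := by
  by_cases hy : (0 : F) = W.negY 0 0
  · exact slope_of_Y_eq rfl hy
  · rw [slope_of_Y_ne rfl hy]
    simp [ha₄]

lemma two_nsmul_some_zero_zero (h : W.Nonsingular 0 0) (ha₄ : W.a₄ = 0) :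
    ∃ h₂ : W.Nonsingular (-W.a₂) (W.a₁ * W.a₂ - W.a₃), 2 • Point.some 0 0 h = .some _ _ h₂ := by
  have ha₃ : W.a₃ ≠ 0 := by simpa [ha₄] using (nonsingular_zero.mp h).2
  have hy : (0 : F) ≠ W.negY 0 0 := by simpa [negY, eq_comm] using ha₃
  have hx₂ : W.addX 0 0 (W.slope 0 0 0 0) = -W.a₂ := by
    simp [slope_zero_zero_zero_zero ha₄]
  have hy₂ : W.addY 0 0 0 (W.slope 0 0 0 0) = W.a₁ * W.a₂ - W.a₃ := by
    rw [slope_zero_zero_zero_zero ha₄, addY_zero_zero_zero_zero]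
  refine ⟨hx₂ ▸ hy₂ ▸ nonsingular_add h h fun hxy => hy hxy.2, ?_⟩
  rw [two_nsmul, Point.add_self_of_Y_ne hy]
  congr

theorem addOrderOf_some_zero_zero_eq_four (h : W.Nonsingular 0 0) (ha₄ : W.a₄ = 0)
    (ha₃ : W.a₃ = W.a₁ * W.a₂) : addOrderOf (Point.some 0 0 h) = 4 := by
  obtain ⟨h₂, hP₂⟩ := two_nsmul_some_zero_zero h ha₄
  have hP₄ : 4 • Point.some 0 0 h = 0 := by
    rw [show 4 = 2 * 2 from rfl, mul_nsmul, hP₂, two_nsmul]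
    exact Point.add_self_of_Y_eq (by rw [negY, ha₃]; ring)
  exact addOrderOf_eq_prime_pow (p := 2) (n := 1) (hP₂ ▸ Point.some_ne_zero h₂) hP₄

end WeierstrassCurve.Affine

/-- On the elliptic curve `y² + txy + (t²(t−1)/16)y = x³ + (t(t−1)/16)x²` over `ℚ(t)`,
the point `(0, 0)` is a torsion point of exact order `4`. -/
theorem stmt11 :
    ∀ W : Affine (RatFunc ℚ),
      W = { a₁ := RatFunc.X, a₂ := RatFunc.X * (RatFunc.X - 1) / 16,
            a₃ := RatFunc.X ^ 2 * (RatFunc.X - 1) / 16, a₄ := 0, a₆ := 0 } →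
      ∃ h : W.Nonsingular 0 0, addOrderOf (Affine.Point.some _ _ h) = 4 := by
  intro W hW
  have hX : (RatFunc.X : RatFunc ℚ) ≠ 0 := RatFunc.X_ne_zero
  have hX₁ : (RatFunc.X : RatFunc ℚ) - 1 ≠ 0 := by
    rw [sub_ne_zero]
    intro h
    simpa using congrArg (RatFunc.eval (RingHom.id ℚ) 0) h
  have h : W.Nonsingular 0 0 :=
    Affine.nonsingular_zero.mpr ⟨by rw [hW], .inl (by rw [hW]; simp [hX, hX₁])⟩
  exact ⟨h, Affine.addOrderOf_some_zero_zero_eq_four h (by rw [hW]) (by rw [hW]; ring)⟩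
end

section
/- Define χ₁, …, χ₇ ∈ ℚ[p₀, p₁, p₂, q₀, q₁, q₂, q₃] by: χ₁ = 6p₂ + 25; χ₂ = 6q₃ − 2p₁; χ₃ = −q₂ + 13p₂² + 108p₂ + p₀ + 221; χ₄ = 9q₃² − 6p₁q₃ − q₂ − q₀ + 8p₂³ + 85p₂² + (2p₀ + 300)p₂ + p₁² + 10p₀ + 350; χ₅ = (6p₂ + 26)q₃ + q₁ − 2p₁p₂ − 10p₁; χ₆ = −q₂ + p₂² + 12p₂ + 27; χ₇ = q₃. Then the following identities hold in ℚ[p₀,…,q₃]: p₂ = (χ₁ − 25)/6; p₁ = (6χ₇ − χ₂)/2; p₀ = −(3χ₆ − 3χ₃ + χ₁² − 2χ₁ + 7)/3; q₃ = χ₇; q₂ = −(36χ₆ − χ₁² − 22χ₁ + 203)/36; q₁ = (24χ₇ + 6χ₅ + (−χ₁ − 5)χ₂)/6; and q₀ = (27χ₂² − 8χ₁³ − 84χ₁² + 120χ₁ − 136)/108 − (χ₁ + 2)χ₆/3 − χ₄ + (χ₁ + 5)χ₃/3. In particular ℚ[χ₁, …, χ₇] = ℚ[p₀, p₁, p₂,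 q₀, q₁, q₂, q₃]. -/
/-! The substitution `(p, q) ↦ χ` is triangular: in the order `χ₁, χ₇, χ₂, χ₆, χ₃, χ₅, χ₄`
each character is a unit multiple of one new coefficient (`p₂, q₃, p₁, q₂, p₀, q₁, q₀`)
plus a polynomial in the coefficients already recovered, so back-substitution expresses
every coefficient as a polynomial in the `χᵢ`. -/

open MvPolynomial

namespace MvPolynomial

variable {σ K : Type*}

theorem C_one_div_ofNat_mul_ofNat [Field K] [CharZero K] (n : ℕ) [n.AtLeastTwo] :
    (C (1 / OfNat.ofNat n : K) : MvPolynomial σ K) * OfNat.ofNat n = 1 := by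
  rw [← map_ofNat C n, ← C_mul, one_div_mul_cancel (OfNat.ofNat_ne_zero n), C_1]

theorem eq_top_of_forall_X_mem [CommSemiring K] {S : Subalgebra K (MvPolynomial σ K)}
    (h : ∀ i, X i ∈ S) : S = ⊤ :=
  eq_top_iff.2 <| adjoin_range_X (R := K) ▸ Algebra.adjoin_le (Set.range_subset_iff.2 h)

end MvPolynomial

theorem weierstrass_coeffs_eq_of_characters {σ : Type*}
    {p₀ p₁ p₂ q₀ q₁ q₂ q₃ χ₁ χ₂ χ₃ χ₄ χ₅ χ₆ χ₇ : MvPolynomial σ ℚ}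
    (h1 : χ₁ = 6 * p₂ + 25)
    (h2 : χ₂ = 6 * q₃ - 2 * p₁)
    (h3 : χ₃ = -q₂ + 13 * p₂ ^ 2 + 108 * p₂ + p₀ + 221)
    (h4 : χ₄ = 9 * q₃ ^ 2 - 6 * p₁ * q₃ - q₂ - q₀ + 8 * p₂ ^ 3 + 85 * p₂ ^ 2
        + (2 * p₀ + 300) * p₂ + p₁ ^ 2 + 10 * p₀ + 350)
    (h5 : χ₅ = (6 * p₂ + 26) * q₃ + q₁ - 2 * p₁ * p₂ - 10 * p₁)
    (h6 : χ₆ = -q₂ + p₂ ^ 2 + 12 * p₂ + 27)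
    (h7 : χ₇ = q₃) :
    p₂ = C (1 / 6 : ℚ) * (χ₁ - 25) ∧
     p₁ = C (1 / 2 : ℚ) * (6 * χ₇ - χ₂) ∧
     p₀ = -(C (1 / 3 : ℚ) * (3 * χ₆ - 3 * χ₃ + χ₁ ^ 2 - 2 * χ₁ + 7)) ∧
     q₃ = χ₇ ∧
     q₂ = -(C (1 / 36 : ℚ) * (36 * χ₆ - χ₁ ^ 2 - 22 * χ₁ + 203)) ∧
     q₁ = C (1 / 6 : ℚ) * (24 * χ₇ + 6 * χ₅ + (-χ₁ - 5) * χ₂) ∧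
     q₀ = C (1 / 108 : ℚ) * (27 * χ₂ ^ 2 - 8 * χ₁ ^ 3 - 84 * χ₁ ^ 2 + 120 * χ₁ - 136)
        - C (1 / 3 : ℚ) * ((χ₁ + 2) * χ₆) - χ₄ + C (1 / 3 : ℚ) * ((χ₁ + 5) * χ₃) := by
  -- `ring` treats `C (1 / n)` as an atom, so its inverse relation to `n` is supplied by hand.
  have c2 := C_one_div_ofNat_mul_ofNat (σ := σ) (K := ℚ) 2
  have c3 := C_one_div_ofNat_mul_ofNat (σ := σ) (K := ℚ) 3
  have c6 := C_one_div_ofNat_mul_ofNat (σ := σ) (K := ℚ) 6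
  have c36 := C_one_div_ofNat_mul_ofNat (σ := σ) (K := ℚ) 36
  have c108 := C_one_div_ofNat_mul_ofNat (σ := σ) (K := ℚ) 108
  subst χ₁ χ₂ χ₃ χ₄ χ₅ χ₆ χ₇
  refine ⟨?_, ?_, ?_, rfl, ?_, ?_, ?_⟩
  · linear_combination (-p₂) * c6
  · linear_combination (-p₁) * c2
  · linear_combination (-p₀) * c3
  · linear_combination (-q₂) * c36
  · linear_combination (-q₁) * c6
  · linear_combination
      (-(9 * q₃ ^ 2 - 6 * p₁ * q₃ + p₁ ^ 2 - 16 * p₂ ^ 3 - 228 * p₂ ^ 2 - 1060 * p₂ - 1617))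
        * c108
      + (-(-q₂ + 24 * p₂ ^ 3 + 313 * p₂ ^ 2 + 2 * p₀ * p₂ + 1360 * p₂ + 10 * p₀ + 1967)) * c3

/-- In the polynomial ring `ℚ[p₀, p₁, p₂, q₀, q₁, q₂, q₃]`, define `χ₁, …, χ₇` by the
stated formulas (the fundamental characters of `E₇` in terms of the Weierstrass
coefficients of the `E₇` multiplicative excellent family).  Then the Weierstrass
coefficients are recovered from `χ₁, …, χ₇` by the stated inverse formulas; in
particular `ℚ[χ₁, …, χ₇] = ℚ[p₀, p₁, p₂, q₀, q₁, q₂, q₃]`. -/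
theorem stmt16 :
    ∀ p₀ p₁ p₂ q₀ q₁ q₂ q₃ χ₁ χ₂ χ₃ χ₄ χ₅ χ₆ χ₇ : MvPolynomial (Fin 7) ℚ,
    p₀ = X 0 → p₁ = X 1 → p₂ = X 2 → q₀ = X 3 → q₁ = X 4 → q₂ = X 5 → q₃ = X 6 →
    χ₁ = 6 * p₂ + 25 →
    χ₂ = 6 * q₃ - 2 * p₁ →
    χ₃ = -q₂ + 13 * p₂ ^ 2 + 108 * p₂ + p₀ + 221 →
    χ₄ = 9 * q₃ ^ 2 - 6 * p₁ * q₃ - q₂ - q₀ + 8 * p₂ ^ 3 + 85 * p₂ ^ 2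
        + (2 * p₀ + 300) * p₂ + p₁ ^ 2 + 10 * p₀ + 350 →
    χ₅ = (6 * p₂ + 26) * q₃ + q₁ - 2 * p₁ * p₂ - 10 * p₁ →
    χ₆ = -q₂ + p₂ ^ 2 + 12 * p₂ + 27 →
    χ₇ = q₃ →
    (p₂ = C (1 / 6 : ℚ) * (χ₁ - 25) ∧
     p₁ = C (1 / 2 : ℚ) * (6 * χ₇ - χ₂) ∧
     p₀ = -(C (1 / 3 : ℚ) * (3 * χ₆ - 3 * χ₃ + χ₁ ^ 2 - 2 * χ₁ + 7)) ∧
     q₃ = χ₇ ∧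
     q₂ = -(C (1 / 36 : ℚ) * (36 * χ₆ - χ₁ ^ 2 - 22 * χ₁ + 203)) ∧
     q₁ = C (1 / 6 : ℚ) * (24 * χ₇ + 6 * χ₅ + (-χ₁ - 5) * χ₂) ∧
     q₀ = C (1 / 108 : ℚ) * (27 * χ₂ ^ 2 - 8 * χ₁ ^ 3 - 84 * χ₁ ^ 2 + 120 * χ₁ - 136)
        - C (1 / 3 : ℚ) * ((χ₁ + 2) * χ₆) - χ₄ + C (1 / 3 : ℚ) * ((χ₁ + 5) * χ₃)) ∧
    Algebra.adjoin ℚ {χ₁, χ₂, χ₃, χ₄, χ₅, χ₆, χ₇} = ⊤ := by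
  intro p₀ p₁ p₂ q₀ q₁ q₂ q₃ χ₁ χ₂ χ₃ χ₄ χ₅ χ₆ χ₇ hp₀ hp₁ hp₂ hq₀ hq₁ hq₂ hq₃ h1 h2 h3 h4 h5 h6 h7
  have inv := weierstrass_coeffs_eq_of_characters h1 h2 h3 h4 h5 h6 h7
  refine ⟨inv, eq_top_of_forall_X_mem fun i => ?_⟩
  obtain ⟨e2, e1, e0, f3, f2, f1, f0⟩ := inv
  subst p₀ p₁ p₂ q₀ q₁ q₂ q₃
  set A := Algebra.adjoin ℚ {χ₁, χ₂, χ₃, χ₄, χ₅, χ₆, χ₇}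
  obtain ⟨m₁, m₂, m₃, m₄, m₅, m₆, m₇⟩ :
      χ₁ ∈ A ∧ χ₂ ∈ A ∧ χ₃ ∈ A ∧ χ₄ ∈ A ∧ χ₅ ∈ A ∧ χ₆ ∈ A ∧ χ₇ ∈ A := by
    refine ⟨?_, ?_, ?_, ?_, ?_, ?_, ?_⟩ <;> exact Algebra.subset_adjoin (by simp)
  have C_mem (a : ℚ) : C a ∈ A := algebraMap_eq (R := ℚ) (σ := Fin 7) ▸ A.algebraMap_mem a
  clear_value A
  fin_cases i <;> simp only [Fin.zero_eta, Fin.mk_one, Fin.reduceFinMk, e0, e1, e2, f0, f1, f2, f3] <;>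
    apply_rules (maxDepth := 100) [add_mem, sub_mem, mul_mem, neg_mem, pow_mem, ofNat_mem, C_mem,
      m₁, m₂, m₃, m₄, m₅, m₆, m₇]
end
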